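/- Let s be a binary sequence of length ℓ starting with 0, having t runs with run lengths lor(s,1),…,lor(s,t). For 1 ≤ i ≤ t and k ≥ 0, let z_{i,k} be the alternating binary sequence of length i starting with 0 followed by k copies of the character 1/2. Then d_DTW(z_{i,k}, s) = k/2 if and only if k ≥ ∑_{j=i+1}^{t} lor(s,j). -/

import Mathlib

/-- `IsExpansion x x'` : `x'` is obtained from `x` by duplicating each character an
arbitrary positive number of times. -/
def IsExpansion (x x' : List ℝ) : Prop :=
  ∃ ks : List ℕ, ks.length = x.length ∧ (∀ k ∈ ks, 0 < k) ∧
    x' = (List.zipWith (fun k (a : ℝ) => List.replicate k a) ks x).flatten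

/-- The dynamic time warping distance with `ℓ₁` character cost `|a - b|`:
the minimum over all pairs of equal-length expansions of the `ℓ₁` distance. -/
noncomputable def dtw (x y : List ℝ) : ℝ :=
  sInf { c | ∃ x' y', IsExpansion x x' ∧ IsExpansion y y' ∧ x'.length = y'.length ∧
    c = (List.zipWith (fun a b => |a - b|) x' y').sum }

/-- The alternating binary sequence of length `i` starting with `0`
(i.e. `0(10)^m` for `i = 2m+1` and `(01)^m` for `i = 2m`). -/
def altSeq (i : ℕ) : List ℝ :=
  List.ofFn (fun j : Fin i => if (j : ℕ) % 2 = 0 then (0 : ℝ) else 1)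

/-! Each of the `k` copies of `1/2` is warped onto at least one binary character at cost `1/2`,
so every warping costs at least `k/2`. The bound is attained by matching `altSeq i` with the first
`i` runs of `s` and the halves with the remaining runs, padded with the last character of `s`,
which works exactly when those runs have total length at most `k`. Otherwise a warping of cost
below `k/2 + 1/2` would match an expansion of `altSeq i` exactly with a prefix of an expansion of
`s` reaching into run `i + 1`; this is impossible because expansions preserve the number of
changes between adjacent characters, and that prefix has one change more. -/

open List

namespace IsExpansion

@[simp] lemma nil_left_iff {x' : List ℝ} : IsExpansion [] x' ↔ x' = [] := by
  constructor
  · rintro ⟨ks, hlen, -, rfl⟩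
    simp
  · rintro rfl
    exact ⟨[], rfl, by simp, rfl⟩

lemma cons_left_iff {a : ℝ} {x x' : List ℝ} :
    IsExpansion (a :: x) x' ↔ ∃ m rest, IsExpansion x rest ∧ x' = replicate (m + 1) a ++ rest := by
  constructor
  · rintro ⟨_ | ⟨k, ks⟩, hlen, hpos, rfl⟩
    · simp at hlen
    obtain ⟨m, rfl⟩ := Nat.exists_eq_add_of_lt (hpos k mem_cons_self)
    exact ⟨m, _, ⟨ks, by simpa using hlen, fun k hk => hpos k (mem_cons_of_mem _ hk), rfl⟩,
      by simp⟩
  · rintro ⟨m, _, ⟨ks, hlen, hpos, rfl⟩, rfl⟩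
    refine ⟨(m + 1) :: ks, by simpa using hlen, ?_, rfl⟩
    simpa using hpos

lemma append_left_iff {x₁ x₂ x' : List ℝ} :
    IsExpansion (x₁ ++ x₂) x' ↔
      ∃ x₁' x₂', IsExpansion x₁ x₁' ∧ IsExpansion x₂ x₂' ∧ x' = x₁' ++ x₂' := by
  induction x₁ generalizing x' with
  | nil => simp
  | cons a x₁ ih =>
    simp only [cons_append, cons_left_iff, ih]
    constructor
    · rintro ⟨m, _, ⟨x₁', x₂', h₁, h₂, rfl⟩, rfl⟩
      exact ⟨_, x₂', ⟨m, x₁', h₁, rfl⟩, h₂, by simp⟩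
    · rintro ⟨_, x₂', ⟨m, x₁', h₁, rfl⟩, h₂, rfl⟩
      exact ⟨m, _, ⟨x₁', x₂', h₁, h₂, rfl⟩, by simp⟩

lemma append {x₁ x₂ x₁' x₂' : List ℝ} (h₁ : IsExpansion x₁ x₁') (h₂ : IsExpansion x₂ x₂') :
    IsExpansion (x₁ ++ x₂) (x₁' ++ x₂') :=
  append_left_iff.2 ⟨x₁', x₂', h₁, h₂, rfl⟩

protected lemma refl (x : List ℝ) : IsExpansion x x := by
  induction x with
  | nil => simp
  | cons a x ih => exact cons_left_iff.2 ⟨0, x, ih, rfl⟩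

lemma singleton_replicate (a : ℝ) (m : ℕ) : IsExpansion [a] (replicate (m + 1) a) :=
  cons_left_iff.2 ⟨m, [], by simp, by simp⟩

lemma length_le {x x' : List ℝ} (h : IsExpansion x x') : x.length ≤ x'.length := by
  induction x generalizing x' with
  | nil => simp
  | cons a x ih =>
    obtain ⟨m, rest, hrest, rfl⟩ := cons_left_iff.1 h
    simp only [length_cons, length_append, length_replicate]
    have := ih hrest
    omega

lemma subset {x x' : List ℝ} (h : IsExpansion x x') : x' ⊆ x := by
  induction x generalizing x' with
  | nil => simp_all
  | cons a x ih =>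
    obtain ⟨m, rest, hrest, rfl⟩ := cons_left_iff.1 h
    exact append_subset.2 ⟨fun b hb => (eq_of_mem_replicate hb) ▸ mem_cons_self,
      fun b hb => mem_cons_of_mem a (ih hrest hb)⟩

lemma head?_eq {x x' : List ℝ} (h : IsExpansion x x') : x'.head? = x.head? := by
  cases x with
  | nil => simp_all
  | cons a x =>
    obtain ⟨m, rest, -, rfl⟩ := cons_left_iff.1 h
    simp [replicate_succ]

lemma eq_replicate_of_replicate {a : ℝ} {k : ℕ} {x' : List ℝ}
    (h : IsExpansion (replicate k a) x') : ∃ m, k ≤ m ∧ x' = replicate m a :=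
  ⟨x'.length, by simpa using h.length_le,
    eq_replicate_iff.2 ⟨rfl, fun b hb => eq_of_mem_replicate (h.subset hb)⟩⟩

lemma append_replicate_getLast {x : List ℝ} (hx : x ≠ []) (m : ℕ) :
    IsExpansion x (x ++ replicate m (x.getLast hx)) := by
  have h := (IsExpansion.refl x.dropLast).append (singleton_replicate (x.getLast hx) m)
  rwa [dropLast_append_getLast hx, replicate_succ, ← singleton_append, ← append_assoc,
    dropLast_append_getLast hx] at h

end IsExpansion

section NumChanges

variable {α : Type*} [DecidableEq α]

def numChanges : List α → ℕ
  | [] => 0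
  | [_] => 0
  | a :: b :: l => (if a = b then 0 else 1) + numChanges (b :: l)

lemma numChanges_le_append : ∀ u v : List α, numChanges u ≤ numChanges (u ++ v)
  | [], _ => Nat.zero_le _
  | [_], _ => Nat.zero_le _
  | a :: b :: u, v => by
    have := numChanges_le_append (b :: u) v
    simp only [cons_append, numChanges] at this ⊢
    omega

lemma List.IsPrefix.numChanges_le {u v : List α} (h : u <+: v) : numChanges u ≤ numChanges v := by
  obtain ⟨w, rfl⟩ := h
  exact numChanges_le_append u w

lemma numChanges_replicate_append (a : α) (l : List α) :
    ∀ m, numChanges (replicate (m + 1) a ++ l) = numChanges (a :: l)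
  | 0 => rfl
  | m + 1 => by
    rw [← numChanges_replicate_append a l m]
    show numChanges (a :: a :: (replicate m a ++ l)) = numChanges (a :: (replicate m a ++ l))
    simp [numChanges]

lemma numChanges_eq_length_sub_one_of_isChain :
    ∀ {l : List α}, IsChain (· ≠ ·) l → numChanges l = l.length - 1
  | [], _ => rfl
  | [_], _ => rfl
  | a :: b :: l, h => by
    rw [isChain_cons_cons] at h
    rw [numChanges, if_neg h.1, numChanges_eq_length_sub_one_of_isChain h.2]
    simp
    omega

end NumChanges

lemma IsExpansion.numChanges_cons_eq {x x' : List ℝ} (h : IsExpansion x x') (a : ℝ) :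
    numChanges (a :: x') = numChanges (a :: x) := by
  induction x generalizing x' a with
  | nil => simp_all
  | cons b x ih =>
    obtain ⟨m, rest, hrest, rfl⟩ := IsExpansion.cons_left_iff.1 h
    rw [replicate_succ, cons_append, numChanges, ← cons_append, ← replicate_succ,
      numChanges_replicate_append, ih hrest, numChanges]

lemma IsExpansion.numChanges_eq {x x' : List ℝ} (h : IsExpansion x x') :
    numChanges x' = numChanges x := by
  cases x with
  | nil => simp_all
  | cons b x =>
    obtain ⟨m, rest, hrest, rfl⟩ := IsExpansion.cons_left_iff.1 h
    rw [numChanges_replicate_append, hrest.numChanges_cons_eq]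

def altBit (n : ℕ) : ℝ := if n % 2 = 0 then 0 else 1

lemma altBit_eq_zero_or_one (n : ℕ) : altBit n = 0 ∨ altBit n = 1 := by
  unfold altBit
  split_ifs <;> simp

lemma altBit_ne_altBit_succ (n : ℕ) : altBit n ≠ altBit (n + 1) := by
  unfold altBit
  split_ifs <;> first | omega | norm_num

@[simp] lemma altSeq_zero : altSeq 0 = [] := rfl

@[simp] lemma length_altSeq (n : ℕ) : (altSeq n).length = n := length_ofFn

lemma altSeq_succ (n : ℕ) : altSeq (n + 1) = altSeq n ++ [altBit n] := by
  rw [altSeq, ofFn_succ', concat_eq_append]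
  rfl

lemma isChain_altSeq (n : ℕ) : IsChain (· ≠ ·) (altSeq n) := by
  rw [isChain_iff_getElem]
  intro j _
  simpa [altSeq, altBit] using altBit_ne_altBit_succ j

lemma numChanges_altSeq (n : ℕ) : numChanges (altSeq n) = n - 1 := by
  rw [numChanges_eq_length_sub_one_of_isChain (isChain_altSeq n), length_altSeq]

def IsBinary (l : List ℝ) : Prop := ∀ a ∈ l, a = 0 ∨ a = 1

lemma isBinary_append {x y : List ℝ} : IsBinary (x ++ y) ↔ IsBinary x ∧ IsBinary y := by
  simp only [IsBinary, mem_append, or_imp, forall_and]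

lemma IsBinary.of_subset {x y : List ℝ} (hx : IsBinary x) (h : y ⊆ x) : IsBinary y :=
  fun a ha => hx a (h ha)

lemma IsExpansion.isBinary {x x' : List ℝ} (h : IsExpansion x x') (hx : IsBinary x) :
    IsBinary x' :=
  hx.of_subset h.subset

lemma isBinary_altSeq (n : ℕ) : IsBinary (altSeq n) := by
  intro a ha
  obtain ⟨j, rfl⟩ := mem_ofFn.1 ha
  exact altBit_eq_zero_or_one j

def l1Cost (x y : List ℝ) : ℝ := (zipWith (fun a b => |a - b|) x y).sum

@[simp] lemma l1Cost_nil_left (y : List ℝ) : l1Cost [] y = 0 := rfl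

@[simp] lemma l1Cost_nil_right (x : List ℝ) : l1Cost x [] = 0 := by
  simp [l1Cost]

@[simp] lemma l1Cost_cons_cons (a b : ℝ) (x y : List ℝ) :
    l1Cost (a :: x) (b :: y) = |a - b| + l1Cost x y := by
  simp [l1Cost]

lemma l1Cost_nonneg : ∀ x y : List ℝ, 0 ≤ l1Cost x y
  | [], _ | _ :: _, [] => by simp
  | a :: x, b :: y => by
    rw [l1Cost_cons_cons]
    exact add_nonneg (abs_nonneg _) (l1Cost_nonneg x y)

@[simp] lemma l1Cost_self (x : List ℝ) : l1Cost x x = 0 := by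
  simp [l1Cost, zipWith_self]

lemma l1Cost_append {x₁ x₂ y₁ y₂ : List ℝ} (h : x₁.length = y₁.length) :
    l1Cost (x₁ ++ x₂) (y₁ ++ y₂) = l1Cost x₁ y₁ + l1Cost x₂ y₂ := by
  rw [l1Cost, zipWith_append h, sum_append]
  rfl

lemma l1Cost_replicate_half {y : List ℝ} (hy : IsBinary y) :
    l1Cost (replicate y.length (1 / 2)) y = y.length / 2 := by
  induction y with
  | nil => simp
  | cons b y ih =>
    have hb : |1 / 2 - b| = 1 / 2 := by
      rcases hy b mem_cons_self with rfl | rfl <;> norm_num [abs_of_neg]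
    rw [length_cons, replicate_succ, l1Cost_cons_cons, hb,
      ih fun a ha => hy a (mem_cons_of_mem b ha)]
    push_cast
    ring

lemma one_le_l1Cost_of_ne :
    ∀ {x y : List ℝ}, IsBinary x → IsBinary y → x.length = y.length → x ≠ y → 1 ≤ l1Cost x y
  | [], [], _, _, _, hne => absurd rfl hne
  | [], _ :: _, _, _, hlen, _ | _ :: _, [], _, _, hlen, _ => by simp at hlen
  | a :: x, b :: y, hx, hy, hlen, hne => by
    rw [l1Cost_cons_cons]
    by_cases hab : a = b
    · subst hab
      have := one_le_l1Cost_of_ne (fun c hc => hx c (mem_cons_of_mem a hc))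
        (fun c hc => hy c (mem_cons_of_mem a hc)) (by simpa using hlen) (by simpa using hne)
      linarith [abs_nonneg (a - a)]
    · have : |a - b| = 1 := by
        rcases hx a mem_cons_self with rfl | rfl <;> rcases hy b mem_cons_self with rfl | rfl <;>
          simp_all
      linarith [l1Cost_nonneg x y]

def warpCosts (x y : List ℝ) : Set ℝ :=
  {c | ∃ x' y', IsExpansion x x' ∧ IsExpansion y y' ∧ x'.length = y'.length ∧ c = l1Cost x' y'}

lemma dtw_eq_sInf_warpCosts (x y : List ℝ) : dtw x y = sInf (warpCosts x y) := rfl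

lemma warpCosts_nonempty {x y : List ℝ} (hx : x ≠ []) (hy : y ≠ []) :
    (warpCosts x y).Nonempty :=
  ⟨_, x ++ replicate y.length (x.getLast hx), y ++ replicate x.length (y.getLast hy),
    .append_replicate_getLast hx _, .append_replicate_getLast hy _, by simp [add_comm], rfl⟩

lemma IsExpansion.exists_l1Cost_eq_of_append_replicate_half {x₀ x' y' : List ℝ} {k : ℕ}
    (hx : IsExpansion (x₀ ++ replicate k (1 / 2)) x') (hy : IsBinary y')
    (hlen : x'.length = y'.length) :
    ∃ w m, IsExpansion x₀ w ∧ k ≤ m ∧ w.length + m = y'.length ∧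
      l1Cost x' y' = l1Cost w (y'.take w.length) + m / 2 := by
  obtain ⟨w, h, hw, hh, rfl⟩ := append_left_iff.1 hx
  obtain ⟨m, hkm, rfl⟩ := hh.eq_replicate_of_replicate
  have hlen' : w.length + m = y'.length := by simpa using hlen
  refine ⟨w, m, hw, hkm, hlen', ?_⟩
  have hdrop : (y'.drop w.length).length = m := by
    rw [length_drop]
    omega
  conv_lhs => rw [← take_append_drop w.length y']
  rw [l1Cost_append (by simp; omega), ← hdrop,
    l1Cost_replicate_half (hy.of_subset (drop_subset _ _))]

lemma half_le_of_mem_warpCosts {x₀ y : List ℝ} {k : ℕ} {c : ℝ} (hy : IsBinary y)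
    (hc : c ∈ warpCosts (x₀ ++ replicate k (1 / 2)) y) : k / 2 ≤ c := by
  obtain ⟨x', y', hx, hy', hlen, rfl⟩ := hc
  obtain ⟨w, m, -, hkm, -, hcost⟩ :=
    hx.exists_l1Cost_eq_of_append_replicate_half (hy'.isBinary hy) hlen
  have hkm' : (k : ℝ) ≤ m := by exact_mod_cast hkm
  linarith [l1Cost_nonneg w (y'.take w.length)]

lemma half_mem_warpCosts {x₀ s₁ s₂ : List ℝ} {k : ℕ} (h₁ : IsExpansion x₀ s₁)
    (hs : IsBinary (s₁ ++ s₂)) (hne : s₁ ++ s₂ ≠ []) (hk : s₂.length ≤ k) :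
    (k / 2 : ℝ) ∈ warpCosts (x₀ ++ replicate k (1 / 2)) (s₁ ++ s₂) := by
  set pad := replicate (k - s₂.length) ((s₁ ++ s₂).getLast hne)
  have hpad : IsBinary (s₂ ++ pad) := isBinary_append.2
    ⟨(isBinary_append.1 hs).2, fun a ha => eq_of_mem_replicate ha ▸ hs _ (getLast_mem hne)⟩
  have hlen : (s₂ ++ pad).length = k := by
    simp only [pad, length_append, length_replicate]
    omega
  refine ⟨s₁ ++ replicate k (1 / 2), s₁ ++ s₂ ++ pad, h₁.append (.refl _),
    .append_replicate_getLast hne _, by simp [hlen], ?_⟩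
  rw [append_assoc, l1Cost_append rfl, l1Cost_self, zero_add, ← hlen, l1Cost_replicate_half hpad]

lemma IsExpansion.length_add_length_le_of_isPrefix {i : ℕ} {s₁ s₂ w y' : List ℝ}
    (h₁ : IsExpansion (altSeq i) s₁) (hhead : s₂.head? = some (altBit i))
    (hw : IsExpansion (altSeq i) w) (hy : IsExpansion (s₁ ++ s₂) y') (hpre : w <+: y') :
    w.length + s₂.length ≤ y'.length := by
  obtain ⟨y₁, y₂, hy₁, hy₂, rfl⟩ := append_left_iff.1 hy
  have htake : y₂.take 1 = [altBit i] := by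
    rw [take_one, hy₂.head?_eq, hhead]
    rfl
  have hchanges : numChanges (y₁ ++ y₂.take 1) = i := by
    rw [htake, (hy₁.append (.refl _)).numChanges_eq, (h₁.append (.refl _)).numChanges_eq,
      ← altSeq_succ, numChanges_altSeq, Nat.add_sub_cancel]
  have hw₁ : w.length ≤ y₁.length := by
    by_contra! hlt
    have hi : i ≠ 0 := by
      rintro rfl
      simp [nil_left_iff.1 (altSeq_zero ▸ hw)] at hlt
    have hpre₁ : y₁ ++ y₂.take 1 <+: w :=
      prefix_of_prefix_length_le ((prefix_append_right_inj y₁).2 (take_prefix 1 y₂)) hpre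
        (by simp only [length_append, length_take]; omega)
    have := hpre₁.numChanges_le
    rw [hchanges, hw.numChanges_eq, numChanges_altSeq] at this
    omega
  have := hy₂.length_le
  simp only [length_append]
  omega

lemma add_half_le_of_mem_warpCosts {i k : ℕ} {s₁ s₂ : List ℝ} {c : ℝ}
    (h₁ : IsExpansion (altSeq i) s₁) (h₂ : IsBinary s₂) (hhead : ∀ a ∈ s₂.head?, a = altBit i)
    (hk : k < s₂.length) (hc : c ∈ warpCosts (altSeq i ++ replicate k (1 / 2)) (s₁ ++ s₂)) :
    k / 2 + 1 / 2 ≤ c := by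
  obtain ⟨x', y', hx, hy, hlen, rfl⟩ := hc
  have hy' : IsBinary y' := hy.isBinary (isBinary_append.2 ⟨h₁.isBinary (isBinary_altSeq i), h₂⟩)
  obtain ⟨w, m, hw, hkm, hlen', hcost⟩ :=
    hx.exists_l1Cost_eq_of_append_replicate_half hy' hlen
  have hkm' : (k : ℝ) ≤ m := by exact_mod_cast hkm
  rw [hcost]
  rcases eq_or_ne w (y'.take w.length) with hpre | hne
  · have hhead' : s₂.head? = some (altBit i) := by
      obtain ⟨a, l, rfl⟩ := exists_cons_of_length_pos (Nat.zero_lt_of_lt hk)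
      exact congrArg some (hhead a rfl)
    have := h₁.length_add_length_le_of_isPrefix hhead' hw hy (prefix_iff_eq_take.2 hpre)
    have hm : (k : ℝ) + 1 ≤ m := by exact_mod_cast (show k + 1 ≤ m by omega)
    linarith [l1Cost_nonneg w (y'.take w.length)]
  · have := one_le_l1Cost_of_ne (hw.isBinary (isBinary_altSeq i))
      (hy'.of_subset (take_subset _ _)) (by simp; omega) hne
    linarith

lemma dtw_altSeq_append_replicate_half_eq_iff {i k : ℕ} (hi : 1 ≤ i) {s₁ s₂ : List ℝ}
    (h₁ : IsExpansion (altSeq i) s₁) (h₂ : IsBinary s₂) (hhead : ∀ a ∈ s₂.head?, a = altBit i) :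
    dtw (altSeq i ++ replicate k (1 / 2)) (s₁ ++ s₂) = k / 2 ↔ s₂.length ≤ k := by
  have hs : IsBinary (s₁ ++ s₂) := isBinary_append.2 ⟨h₁.isBinary (isBinary_altSeq i), h₂⟩
  have hs₁ : s₁ ≠ [] := ne_nil_of_length_pos (hi.trans (length_altSeq i ▸ h₁.length_le))
  have hne : s₁ ++ s₂ ≠ [] := by simp [hs₁]
  rw [dtw_eq_sInf_warpCosts]
  constructor
  · intro heq
    by_contra! hk
    have := le_csInf (warpCosts_nonempty (ne_nil_of_length_pos (by simp; omega)) hne)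
      fun c hc => add_half_le_of_mem_warpCosts h₁ h₂ hhead hk hc
    linarith
  · intro hk
    exact IsLeast.csInf_eq
      ⟨half_mem_warpCosts h₁ hs hne hk, fun c hc => half_le_of_mem_warpCosts hs hc⟩

def runs {n : ℕ} (L : Fin n → ℕ) (v : Fin n → ℝ) : List ℝ :=
  (ofFn fun j => replicate (L j) (v j)).flatten

lemma isExpansion_runs {n : ℕ} {L : Fin n → ℕ} (hL : ∀ j, 0 < L j) (v : Fin n → ℝ) :
    IsExpansion (ofFn v) (runs L v) := by
  refine ⟨ofFn L, by simp, by simpa [mem_ofFn] using hL, ?_⟩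
  rw [runs]
  congr 1
  apply ext_getElem <;> simp

lemma runs_add {m n : ℕ} (L : Fin (m + n) → ℕ) (v : Fin (m + n) → ℝ) :
    runs L v = runs (fun j => L (Fin.castAdd n j)) (fun j => v (Fin.castAdd n j)) ++
      runs (fun j => L (Fin.natAdd m j)) (fun j => v (Fin.natAdd m j)) := by
  rw [runs, ofFn_add, flatten_append]
  rfl

lemma length_runs {n : ℕ} (L : Fin n → ℕ) (v : Fin n → ℝ) : (runs L v).length = ∑ j, L j := by
  simp [runs, length_flatten, sum_ofFn]

theorem dtw_altseq_halves_query_iff_general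
    (t : ℕ) (L : Fin t → ℕ) (hL : ∀ j, 0 < L j)
    (s : List ℝ)
    (hs : s = (List.ofFn (fun j : Fin t =>
      List.replicate (L j) (if (j : ℕ) % 2 = 0 then (0 : ℝ) else 1))).flatten)
    (i k : ℕ) (hi1 : 1 ≤ i) (hit : i ≤ t) :
    dtw (altSeq i ++ List.replicate k ((1 : ℝ) / 2)) s = k / 2 ↔
      (∑ j ∈ Finset.univ.filter (fun j : Fin t => i ≤ (j : ℕ)), L j) ≤ k := by
  obtain ⟨r, rfl⟩ := Nat.exists_eq_add_of_le hit
  have hs' : s = runs L fun j => altBit j := hs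
  have h₁ : IsExpansion (altSeq i)
      (runs (fun j => L (Fin.castAdd r j)) fun j => altBit (Fin.castAdd r j)) :=
    isExpansion_runs (fun j => hL _) _
  have h₂ : IsExpansion (ofFn fun j : Fin r => altBit (i + j))
      (runs (fun j => L (Fin.natAdd i j)) fun j => altBit (Fin.natAdd i j)) :=
    isExpansion_runs (fun j => hL _) _
  rw [hs', runs_add, dtw_altSeq_append_replicate_half_eq_iff hi1 h₁
    (h₂.isBinary fun a ha => ?binary) fun a ha => ?head, length_runs, Finset.sum_filter,
    Fin.sum_univ_add, Finset.sum_eq_zero fun j _ => if_neg (not_le.2 j.is_lt), zero_add]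
  · simp
  case binary =>
    obtain ⟨j, rfl⟩ := mem_ofFn.1 ha
    exact altBit_eq_zero_or_one _
  case head =>
    rw [h₂.head?_eq] at ha
    cases r <;> simp_all [ofFn_succ]

/-- Let `s` be a binary sequence starting with `0` having `t` runs of
lengths `L 0, …, L (t-1)` (so the `j`-th run, 0-indexed, consists of `L j` copies of `0`
if `j` is even and of `1` if `j` is odd).  For `1 ≤ i ≤ t` and `k ≥ 0`, with
`z = altSeq i ++ (1/2)^k`, we have `d_DTW(z, s) = k/2` iff
`k ≥ ∑_{j=i}^{t-1} L j` (the total length of runs `i+1,…,t` in 1-indexed terms). -/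
theorem dtw_altseq_halves_query_iff
    (t : ℕ) (ht : 1 ≤ t) (L : Fin t → ℕ) (hL : ∀ j, 0 < L j)
    (s : List ℝ)
    (hs : s = (List.ofFn (fun j : Fin t =>
      List.replicate (L j) (if (j : ℕ) % 2 = 0 then (0 : ℝ) else 1))).flatten)
    (i k : ℕ) (hi1 : 1 ≤ i) (hit : i ≤ t) :
    dtw (altSeq i ++ List.replicate k ((1 : ℝ) / 2)) s = k / 2 ↔
      (∑ j ∈ Finset.univ.filter (fun j : Fin t => i ≤ (j : ℕ)), L j) ≤ k :=
  dtw_altseq_halves_query_iff_general t L hL s hs i k hi1 hit
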